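/- Let G be a ribbon graph, v a vertex, and e_1, e_2 two edges incident to v. Then there exists γ_0 ∈ Pic^0(G) such that for every spanning tree T, the class of β_{(v,e_2)}(T) equals γ_0 plus the class of β_{(v,e_1)}(T) in Pic^g(G). In particular β_{(v,e_1)}(T) - β_{(v,e_2)}(T) is, up to linear equivalence, independent of the spanning tree T. -/

import Mathlib

/-- A finite multigraph: vertices, edges, and an (arbitrarily oriented)
pair of endpoints for each edge. -/
structure Multigraph where
  V : Type
  E : Type
  [fV : Fintype V]
  [fE : Fintype E]
  [dV : DecidableEq V]
  [dE : DecidableEq E]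
  ends : E → V × V

attribute [instance] Multigraph.fV Multigraph.fE Multigraph.dV Multigraph.dE

namespace Multigraph

variable (G : Multigraph)

/-- No loop edges. -/
def Loopless : Prop := ∀ e : G.E, (G.ends e).1 ≠ (G.ends e).2

/-- Adjacency via some edge. -/
def Adj (x y : G.V) : Prop := ∃ e : G.E, G.ends e = (x, y) ∨ G.ends e = (y, x)

/-- The multigraph is connected. -/
def Connected : Prop := Nonempty G.V ∧ ∀ x y : G.V, Relation.ReflTransGen G.Adj x y

/-- The degree of a divisor (a divisor is a function `V → ℤ`). -/
def deg (D : G.V → ℤ) : ℤ := ∑ v, D v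

/-- The Laplacian divisor `Δ f` of `f : V → ℤ`. -/
def lap (f : G.V → ℤ) : G.V → ℤ := fun v =>
  ∑ e : G.E, ((if (G.ends e).1 = v then f v - f (G.ends e).2 else 0) +
              (if (G.ends e).2 = v then f v - f (G.ends e).1 else 0))

/-- Linear equivalence of divisors. -/
def LinEquiv (D D' : G.V → ℤ) : Prop := ∃ f : G.V → ℤ, D - D' = G.lap f

/-- `x` and `y` are connected using only edges from `S`. -/
def ConnectsVia (S : Finset G.E) (x y : G.V) : Prop :=
  Relation.ReflTransGen
    (fun a b => ∃ e ∈ S, G.ends e = (a, b) ∨ G.ends e = (b, a)) x y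

/-- A spanning tree, as an edge set: it connects all vertices and has
`#V - 1` edges. -/
def IsSpanningTree (T : Finset G.E) : Prop :=
  (∀ x y : G.V, G.ConnectsVia T x y) ∧ T.card + 1 = Fintype.card G.V

/-- `D` is a `T`-break divisor: one chip on an endpoint of each edge outside `T`. -/
def IsTBreak (T : Finset G.E) (D : G.V → ℤ) : Prop :=
  ∃ ch : G.E → G.V,
    (∀ e ∉ T, ch e = (G.ends e).1 ∨ ch e = (G.ends e).2) ∧
    ∀ v, D v = ((Finset.univ.filter (fun e => e ∉ T ∧ ch e = v)).card : ℤ)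

/-- `D` is a break divisor. -/
def IsBreak (D : G.V → ℤ) : Prop := ∃ T, G.IsSpanningTree T ∧ G.IsTBreak T D

/-- The genus `#E - #V + 1`. -/
def genus : ℤ := (Fintype.card G.E : ℤ) - Fintype.card G.V + 1

end Multigraph

namespace Multigraph

variable (G : Multigraph)

/-- A dart (half-edge / directed edge): an edge with a direction. -/
abbrev Dart := G.E × Bool

/-- The tail (initial vertex) of a dart. -/
def dtail (d : G.Dart) : G.V := if d.2 then (G.ends d.1).1 else (G.ends d.1).2

/-- The head (terminal vertex) of a dart. -/
def dhead (d : G.Dart) : G.V := if d.2 then (G.ends d.1).2 else (G.ends d.1).1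

/-- Reversing a dart. -/
def flipPerm : Equiv.Perm G.Dart :=
  Function.Involutive.toPerm (fun d => (d.1, !d.2)) (by intro d; simp)

end Multigraph

/-- A ribbon graph: a multigraph together with a cyclic ordering of the darts
around each vertex, encoded as a permutation `next` of the darts whose cycles
are exactly the fibers of the tail map. -/
structure RibbonGraph extends Multigraph where
  next : Equiv.Perm (E × Bool)
  cyclic : ∀ d d' : E × Bool,
    toMultigraph.dtail d = toMultigraph.dtail d' ↔ next.SameCycle d d'

namespace RibbonGraph

variable (R : RibbonGraph)

/-- One step of the Bernardi tour with respect to a spanning tree `T`: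
walk along tree edges, cut through non-tree edges. -/
def bernardiStep (T : Finset R.toMultigraph.E) (d : R.toMultigraph.Dart) :
    R.toMultigraph.Dart :=
  if d.1 ∈ T then R.next (R.toMultigraph.flipPerm d) else R.next d

/-- The Bernardi tour: the sequence of darts considered by the Bernardi
process started at the dart `d0`. -/
def bernardiTour (T : Finset R.toMultigraph.E) (d0 : R.toMultigraph.Dart)
    (n : ℕ) : R.toMultigraph.Dart :=
  (R.bernardiStep T)^[n] d0

open scoped Classical in
/-- The Bernardi divisor `β_{(v,e)}(T)`: a chip is dropped at the current
vertex each time the tour first cuts through an edge not in `T`. -/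
noncomputable def bernardiDiv (T : Finset R.toMultigraph.E)
    (d0 : R.toMultigraph.Dart) : R.toMultigraph.V → ℤ := fun v =>
  ((Finset.univ.filter (fun e : R.toMultigraph.E => e ∉ T ∧
      ∃ i : ℕ, (R.bernardiTour T d0 i).1 = e ∧
        R.toMultigraph.dtail (R.bernardiTour T d0 i) = v ∧
        ∀ j < i, (R.bernardiTour T d0 j).1 ≠ e)).card : ℤ)

/-- The face permutation of a ribbon graph. -/
def facePerm : Equiv.Perm (R.toMultigraph.Dart) := R.next * R.toMultigraph.flipPerm

/-- Darts belonging to the same face. -/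
def faceSetoid : Setoid (R.toMultigraph.Dart) :=
  ⟨R.facePerm.SameCycle,
    ⟨fun _ => Equiv.Perm.SameCycle.refl _ _, fun h => h.symm, fun h h' => h.trans h'⟩⟩

/-- The number of faces of a ribbon graph. -/
noncomputable def numFaces : ℕ := Nat.card (Quotient R.faceSetoid)

/-- A ribbon graph is planar iff Euler's formula `#V - #E + #F = 2` holds,
i.e. its topological genus is zero. -/
def Planar : Prop :=
  (Fintype.card R.toMultigraph.V : ℤ) - Fintype.card R.toMultigraph.E + R.numFaces = 2

end RibbonGraph

/-!
Fix a spanning tree `T`. The Bernardi step is a permutation of the darts, and it is a single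
cycle: over the empty edge set its cycles are the vertex rotations, and adding a tree edge
multiplies it by the transposition of the two darts of that edge, which merges two distinct
cycles. Hence the tour from any dart visits every dart, and restarting it one step later only
moves the first visit of the current edge to the reversed dart, so that `β + [tail]` changes by
`head d - tail d`. Rotating the start `d` to `next d` is one such step when `d` is not a tree
dart; when it is, the tour first explores the far side `P` of its edge, and the darts visited
there contribute `∑ (head - tail) = -Δ 1_P`. So `β(next d) ~ β(d) + (head d - tail d)` with a
correction independent of `T`, and walking around `v` from `d₁` to `d₂` gives `γ₀`.
-/

theorem Function.pred_iterate_iff_of_invariant {α : Type*} {f : α → α} {Q : α → Prop}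
    {x : α} {a b : ℕ} (h : ∀ j, a ≤ j → j < b → (Q (f^[j + 1] x) ↔ Q (f^[j] x)))
    {j : ℕ} (haj : a ≤ j) (hjb : j ≤ b) : Q (f^[j] x) ↔ Q (f^[a] x) := by
  induction j, haj using Nat.le_induction with
  | base => rfl
  | succ j haj ih => rw [h j haj (by omega), ih (by omega)]

namespace Equiv.Perm

variable {α : Type*} [Finite α] [DecidableEq α] {π : Perm α} {a b : α}

theorem sameCycle_mul_swap_of_sameCycle (hab : ¬π.SameCycle a b) {z : α}
    (hz : π.SameCycle z b) : (π * swap a b).SameCycle z b := by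
  obtain ⟨n, hn⟩ := hz.exists_nat_pow_eq
  induction n generalizing z with
  | zero => rw [← hn]; rfl
  | succ n ih =>
    by_cases hzb : z = b
    · rw [hzb]
    have hza : z ≠ a := by rintro rfl; exact hab hz
    have hstep : (π * swap a b) z = π z := by simp [swap_apply_of_ne_of_ne hza hzb]
    rw [← sameCycle_apply_left, hstep]
    exact ih (sameCycle_apply_left.2 hz) (by rwa [← mul_apply, ← pow_succ])

theorem sameCycle_mul_swap (hab : ¬π.SameCycle a b) : (π * swap a b).SameCycle a b := by
  have hb : (π * swap a b) a = π b := by simp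
  rw [← sameCycle_apply_left, hb]
  exact sameCycle_mul_swap_of_sameCycle hab (sameCycle_apply_left.2 (SameCycle.refl _ _))

theorem SameCycle.mul_swap (hab : ¬π.SameCycle a b) {x y : α} (h : π.SameCycle x y) :
    (π * swap a b).SameCycle x y := by
  have hmerge := sameCycle_mul_swap hab
  have hnext : ∀ z, (π * swap a b).SameCycle z (π z) := by
    intro z
    by_cases hza : z = a
    · subst hza
      have : π z = (π * swap z b) b := by simp
      rw [this, sameCycle_apply_right]
      exact hmerge
    by_cases hzb : z = b
    · subst hzb
      have : π z = (π * swap a z) a := by simp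
      rw [this, sameCycle_apply_right]
      exact hmerge.symm
    have : π z = (π * swap a b) z := by simp [swap_apply_of_ne_of_ne hza hzb]
    rw [this, sameCycle_apply_right]
  obtain ⟨n, rfl⟩ := h.exists_nat_pow_eq
  clear h
  induction n with
  | zero => rfl
  | succ n ih => rw [pow_succ', mul_apply]; exact ih.trans (hnext _)

end Equiv.Perm

namespace Multigraph

open Function

variable {G : Multigraph}

theorem ConnectsVia.symm {F : Finset G.E} {x y : G.V} (h : G.ConnectsVia F x y) :
    G.ConnectsVia F y x := by
  induction h with
  | refl => exact Relation.ReflTransGen.refl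
  | tail _ hab ih =>
    obtain ⟨e, he, hab⟩ := hab
    exact Relation.ReflTransGen.head ⟨e, he, hab.symm⟩ ih

theorem ConnectsVia.mono {F F' : Finset G.E} (hF : F ⊆ F') {x y : G.V}
    (h : G.ConnectsVia F x y) : G.ConnectsVia F' x y :=
  Relation.ReflTransGen.mono (fun _ _ ⟨e, he, hab⟩ => ⟨e, hF he, hab⟩) x y h

theorem connectsVia_ends {F : Finset G.E} {e : G.E} (he : e ∈ F) :
    G.ConnectsVia F (G.ends e).1 (G.ends e).2 :=
  Relation.ReflTransGen.single ⟨e, he, Or.inl rfl⟩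

theorem eq_of_connectsVia_empty {x y : G.V} (h : G.ConnectsVia ∅ x y) : x = y := by
  induction h with
  | refl => rfl
  | tail _ hstep ih => obtain ⟨e, he, _⟩ := hstep; simp at he

theorem card_le_card_add_one_of_connectsVia {F : Finset G.E}
    (h : ∀ x y, G.ConnectsVia F x y) : Fintype.card G.V ≤ F.card + 1 := by
  rcases isEmpty_or_nonempty G.V with _ | _
  · simp
  let H := SimpleGraph.fromRel fun x y => ∃ e ∈ F, G.ends e = (x, y)
  have hH : H.Connected := by
    refine ⟨fun x y => ?_⟩
    induction h x y with
    | refl => rfl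
    | @tail a b _ hab ih =>
      obtain ⟨e, he, hend⟩ := hab
      refine ih.trans ?_
      by_cases hne : a = b
      · rw [hne]
      · refine SimpleGraph.Adj.reachable ((SimpleGraph.fromRel_adj _ _ _).2 ⟨hne, ?_⟩)
        rcases hend with hend | hend
        exacts [Or.inl ⟨e, he, hend⟩, Or.inr ⟨e, he, hend⟩]
  have hedges : H.edgeSet ⊆ ↑(F.image fun e => s((G.ends e).1, (G.ends e).2)) := by
    intro z hz
    induction z using Sym2.ind with
    | _ x y =>
      obtain ⟨-, ⟨e, he, hend⟩ | ⟨e, he, hend⟩⟩ :=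
        (SimpleGraph.fromRel_adj _ _ _).1 ((H.mem_edgeSet).1 hz)
      · exact Finset.mem_image.2 ⟨e, he, by rw [hend]⟩
      · exact Finset.mem_image.2 ⟨e, he, by rw [hend, Sym2.eq_swap]⟩
  calc Fintype.card G.V = Nat.card G.V := Nat.card_eq_fintype_card.symm
    _ ≤ Nat.card H.edgeSet + 1 := hH.card_vert_le_card_edgeSet_add_one
    _ ≤ F.card + 1 := by
      rw [Nat.card_coe_set_eq]
      grw [Set.ncard_le_ncard hedges, Set.ncard_coe_finset, Finset.card_image_le]

theorem IsSpanningTree.not_connectsVia_erase {T : Finset G.E} (hT : G.IsSpanningTree T)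
    {t : G.E} (ht : t ∈ T) : ¬ G.ConnectsVia (T.erase t) (G.ends t).1 (G.ends t).2 := by
  intro hcon
  have hall : ∀ x y, G.ConnectsVia (T.erase t) x y := fun x y =>
    Relation.ReflTransGen.lift' id (fun a b ⟨e, he, hab⟩ => by
      by_cases het : e = t
      · subst het
        rcases hab with hab | hab <;> rw [hab] at hcon
        exacts [hcon, hcon.symm]
      · exact Relation.ReflTransGen.single ⟨e, Finset.mem_erase.2 ⟨het, he⟩, hab⟩)
      x y (hT.1 x y)
  have := card_le_card_add_one_of_connectsVia hall
  have := Finset.card_erase_add_one ht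
  have := hT.2
  omega

theorem flipPerm_apply (d : G.Dart) : G.flipPerm d = (d.1, !d.2) := rfl

@[simp]
theorem fst_flipPerm (d : G.Dart) : (G.flipPerm d).1 = d.1 := rfl

@[simp]
theorem dtail_flipPerm (d : G.Dart) : G.dtail (G.flipPerm d) = G.dhead d := by
  rcases d with ⟨e, _ | _⟩ <;> rfl

@[simp]
theorem dhead_flipPerm (d : G.Dart) : G.dhead (G.flipPerm d) = G.dtail d := by
  rcases d with ⟨e, _ | _⟩ <;> rfl

@[simp]
theorem flipPerm_flipPerm (d : G.Dart) : G.flipPerm (G.flipPerm d) = d := by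
  simp [flipPerm_apply]

theorem flipPerm_ne (d : G.Dart) : G.flipPerm d ≠ d := by
  rcases d with ⟨e, _ | _⟩ <;> simp [flipPerm_apply]

theorem eq_or_eq_flipPerm_of_fst_eq {d δ : G.Dart} (h : δ.1 = d.1) :
    δ = d ∨ δ = G.flipPerm d := by
  rcases d with ⟨e, _ | _⟩ <;> rcases δ with ⟨e', _ | _⟩ <;> simp_all [flipPerm_apply]

theorem connectsVia_dtail_dhead {F : Finset G.E} {d : G.Dart} (hd : d.1 ∈ F) :
    G.ConnectsVia F (G.dtail d) (G.dhead d) := by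
  rcases d with ⟨e, _ | _⟩
  · exact (connectsVia_ends hd).symm
  · exact connectsVia_ends hd

theorem IsSpanningTree.not_connectsVia_erase_dhead {T : Finset G.E} (hT : G.IsSpanningTree T)
    {d : G.Dart} (hd : d.1 ∈ T) : ¬ G.ConnectsVia (T.erase d.1) (G.dhead d) (G.dtail d) := by
  rcases d with ⟨e, _ | _⟩ <;> intro h
  exacts [hT.not_connectsVia_erase hd h, hT.not_connectsVia_erase hd h.symm]

theorem rel_of_connectsVia {F : Finset G.E} {r : G.Dart → G.Dart → Prop} (hr : Equivalence r)
    (htail : ∀ d d', G.dtail d = G.dtail d' → r d d')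
    (hedge : ∀ e ∈ F, r (e, true) (e, false))
    {d d' : G.Dart} (h : G.ConnectsVia F (G.dtail d) (G.dtail d')) : r d d' := by
  suffices ∀ w, G.ConnectsVia F (G.dtail d) w → ∀ d', G.dtail d' = w → r d d' from
    this _ h d' rfl
  intro w hw
  induction hw with
  | refl => exact fun d' hd' => htail d d' hd'.symm
  | @tail a b _ hab ih =>
    obtain ⟨e, he, hend | hend⟩ := hab <;> intro d' hd'
    · exact hr.trans (ih (e, true) (by simp [dtail, hend]))
        (hr.trans (hedge e he) (htail _ _ (by rw [hd']; simp [dtail, hend])))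
    · exact hr.trans (ih (e, false) (by simp [dtail, hend]))
        (hr.trans (hr.symm (hedge e he)) (htail _ _ (by rw [hd']; simp [dtail, hend])))

theorem lap_add (f g : G.V → ℤ) : G.lap (f + g) = G.lap f + G.lap g := by
  funext v
  simp only [lap, Pi.add_apply, ← Finset.sum_add_distrib]
  refine Finset.sum_congr rfl fun e _ => ?_
  split_ifs <;> ring

theorem lap_neg (f : G.V → ℤ) : G.lap (-f) = -G.lap f := by
  funext v
  simp only [lap, Pi.neg_apply, ← Finset.sum_neg_distrib]
  refine Finset.sum_congr rfl fun e _ => ?_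
  split_ifs <;> ring

theorem lap_zero : G.lap 0 = 0 := by
  funext v
  simp [lap]

theorem LinEquiv.of_eq {D D' : G.V → ℤ} (h : D = D') : G.LinEquiv D D' :=
  ⟨0, by rw [h, sub_self, lap_zero]⟩

theorem LinEquiv.trans {D₁ D₂ D₃ : G.V → ℤ} (h₁₂ : G.LinEquiv D₁ D₂)
    (h₂₃ : G.LinEquiv D₂ D₃) : G.LinEquiv D₁ D₃ := by
  obtain ⟨f, hf⟩ := h₁₂
  obtain ⟨g, hg⟩ := h₂₃
  exact ⟨f + g, by rw [lap_add, ← hf, ← hg, sub_add_sub_cancel]⟩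

theorem LinEquiv.add_left {D D' : G.V → ℤ} (h : G.LinEquiv D D') (C : G.V → ℤ) :
    G.LinEquiv (C + D) (C + D') := by
  obtain ⟨f, hf⟩ := h
  exact ⟨f, by rw [add_sub_add_left_eq_sub, hf]⟩

theorem deg_sum {ι : Type*} (s : Finset ι) (D : ι → G.V → ℤ) :
    G.deg (∑ i ∈ s, D i) = ∑ i ∈ s, G.deg (D i) := by
  simp only [deg, Finset.sum_apply]
  exact Finset.sum_comm

variable (G) in
def dartDiv (d : G.Dart) : G.V → ℤ := Pi.single (G.dhead d) 1 - Pi.single (G.dtail d) 1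

theorem deg_dartDiv (d : G.Dart) : G.deg (G.dartDiv d) = 0 := by
  simp [deg, dartDiv, Finset.sum_sub_distrib]

theorem sum_smul_dartDiv (g : G.V → ℤ) :
    ∑ δ, g (G.dtail δ) • G.dartDiv δ = -G.lap g := by
  funext u
  simp only [Finset.sum_apply, Pi.smul_apply, Pi.neg_apply, lap, ← Finset.sum_neg_distrib,
    Fintype.sum_prod_type, Fintype.sum_bool]
  refine Finset.sum_congr rfl fun e _ => ?_
  simp only [dartDiv, dtail, dhead, Pi.sub_apply, Pi.single_apply, if_true, Bool.false_eq_true,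
    if_false, smul_eq_mul]
  obtain ⟨x, y⟩ := G.ends e
  simp only [eq_comm (a := u)]
  split_ifs <;> subst_vars <;> ring

variable (G) in
def flipOn (F : Finset G.E) : Equiv.Perm G.Dart :=
  Function.Involutive.toPerm (fun d => if d.1 ∈ F then G.flipPerm d else d)
    (by intro d; by_cases h : d.1 ∈ F <;> simp [h, flipPerm_apply])

theorem flipOn_apply (F : Finset G.E) (d : G.Dart) :
    G.flipOn F d = if d.1 ∈ F then G.flipPerm d else d := rfl

variable (G) in
def FirstVisitTail (c : ℕ → G.Dart) (e : G.E) (v : G.V) : Prop :=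
  ∃ i, (c i).1 = e ∧ G.dtail (c i) = v ∧ ∀ j < i, (c j).1 ≠ e

theorem firstVisitTail_iff {c : ℕ → G.Dart} {e : G.E} {i : ℕ} (hi : (c i).1 = e)
    (hfirst : ∀ j < i, (c j).1 ≠ e) {v : G.V} :
    G.FirstVisitTail c e v ↔ G.dtail (c i) = v := by
  refine ⟨fun ⟨i', hi', hv, hfirst'⟩ => ?_, fun hv => ⟨i, hi, hv, hfirst⟩⟩
  obtain rfl : i' = i := by
    rcases lt_trichotomy i' i with h | h | h
    exacts [absurd hi' (hfirst _ h), h, absurd hi (hfirst' _ h)]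
  exact hv

theorem firstVisitTail_succ_iff {c : ℕ → G.Dart} {e : G.E} (h0 : (c 0).1 ≠ e) {v : G.V} :
    G.FirstVisitTail (fun i => c (i + 1)) e v ↔ G.FirstVisitTail c e v := by
  constructor
  · rintro ⟨i, hi, hv, hfirst⟩
    refine ⟨i + 1, hi, hv, fun j hj => ?_⟩
    rcases j with _ | j
    exacts [h0, hfirst j (by omega)]
  · rintro ⟨_ | i, hi, hv, hfirst⟩
    · exact absurd hi h0
    · exact ⟨i, hi, hv, fun j hj => hfirst (j + 1) (by omega)⟩

variable {f : G.Dart → G.Dart}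

theorem minimalPeriod_pos_of_forall_exists_iterate_eq (hcyc : ∀ d d', ∃ n, f^[n] d = d')
    (d : G.Dart) : 0 < minimalPeriod f d := by
  obtain ⟨n, hn⟩ := hcyc (f d) d
  exact IsPeriodicPt.minimalPeriod_pos n.succ_pos
    (by rw [IsPeriodicPt, IsFixedPt, iterate_succ_apply, hn])

theorem exists_iterate_eq_flipPerm (hcyc : ∀ d d', ∃ n, f^[n] d = d') (d : G.Dart) :
    ∃ m, 0 < m ∧ m < minimalPeriod f d ∧ f^[m] d = G.flipPerm d := by
  have hpos := minimalPeriod_pos_of_forall_exists_iterate_eq hcyc d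
  obtain ⟨n, hn⟩ := hcyc d (G.flipPerm d)
  refine ⟨n % minimalPeriod f d, Nat.pos_of_ne_zero fun h0 => G.flipPerm_ne d ?_,
    Nat.mod_lt _ hpos, by rw [iterate_mod_minimalPeriod_eq, hn]⟩
  rw [← hn, ← iterate_mod_minimalPeriod_eq, h0, iterate_zero_apply]

theorem iterate_fst_eq_iff {d : G.Dart} {m j : ℕ} (hm : m < minimalPeriod f d)
    (hflip : f^[m] d = G.flipPerm d) (hj : j < minimalPeriod f d) :
    (f^[j] d).1 = d.1 ↔ j = 0 ∨ j = m := by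
  refine ⟨fun h => ?_, ?_⟩
  · rcases eq_or_eq_flipPerm_of_fst_eq h with h | h
    · exact Or.inl (iterate_injOn_Iio_minimalPeriod hj ((Nat.zero_le _).trans_lt hm) h)
    · exact Or.inr (iterate_injOn_Iio_minimalPeriod hj hm (h.trans hflip.symm))
  · rintro (rfl | rfl)
    · rfl
    · rw [hflip, fst_flipPerm]

end Multigraph

namespace RibbonGraph

open Multigraph Function

variable {R : RibbonGraph} {T : Finset R.E}

variable (R) in
def tourPerm (F : Finset R.E) : Equiv.Perm R.Dart := (R.flipOn F).trans R.next

theorem tourPerm_apply (F : Finset R.E) (d : R.Dart) :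
    R.tourPerm F d = if d.1 ∈ F then R.next (R.flipPerm d) else R.next d := by
  rw [tourPerm, Equiv.trans_apply, flipOn_apply, apply_ite R.next]

theorem coe_tourPerm (T : Finset R.E) : ⇑(R.tourPerm T) = R.bernardiStep T :=
  funext (tourPerm_apply T)

theorem tourPerm_empty : R.tourPerm ∅ = R.next :=
  Equiv.ext fun d => by simp [tourPerm_apply]

theorem tourPerm_insert {F : Finset R.E} {t : R.E} (ht : t ∉ F) :
    R.tourPerm (insert t F) = R.tourPerm F * Equiv.swap (t, true) (t, false) := by
  refine Equiv.ext fun d => ?_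
  rcases d with ⟨e, _ | _⟩ <;> by_cases he : e = t
  all_goals simp [tourPerm_apply, flipPerm_apply, Equiv.swap_apply_def, he, ht]

theorem dtail_next (d : R.Dart) : R.dtail (R.next d) = R.dtail d :=
  ((R.cyclic d (R.next d)).2 (Equiv.Perm.SameCycle.refl _ _ |>.apply_right)).symm

theorem dtail_tourPerm (F : Finset R.E) (d : R.Dart) :
    R.dtail (R.tourPerm F d) = if d.1 ∈ F then R.dhead d else R.dtail d := by
  rw [tourPerm_apply]
  split_ifs <;> simp [dtail_next]

theorem connectsVia_of_sameCycle_tourPerm {F : Finset R.E} {d d' : R.Dart}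
    (h : (R.tourPerm F).SameCycle d d') : R.ConnectsVia F (R.dtail d) (R.dtail d') := by
  obtain ⟨n, rfl⟩ := h.exists_nat_pow_eq
  clear h
  induction n with
  | zero => exact Relation.ReflTransGen.refl
  | succ n ih =>
    refine ih.trans ?_
    rw [pow_succ', Equiv.Perm.mul_apply, dtail_tourPerm]
    split_ifs with h
    exacts [connectsVia_dtail_dhead h, Relation.ReflTransGen.refl]

theorem sameCycle_tourPerm_of_connectsVia {F : Finset R.E} (hT : R.IsSpanningTree T)
    (hF : F ⊆ T) {d d' : R.Dart} (h : R.ConnectsVia F (R.dtail d) (R.dtail d')) :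
    (R.tourPerm F).SameCycle d d' := by
  induction F using Finset.induction_on generalizing d d' with
  | empty =>
    rw [tourPerm_empty]
    exact (R.cyclic d d').1 (eq_of_connectsVia_empty h)
  | insert t F ht ih =>
    have ih' := @ih (subset_trans (Finset.subset_insert t F) hF)
    have hsep : ¬ (R.tourPerm F).SameCycle (t, true) (t, false) := fun hc =>
      hT.not_connectsVia_erase (hF (Finset.mem_insert_self t F))
        ((connectsVia_of_sameCycle_tourPerm hc).mono fun e he =>
          Finset.mem_erase.2 ⟨by rintro rfl; exact ht he, hF (Finset.mem_insert_of_mem he)⟩)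
    rw [tourPerm_insert ht]
    refine rel_of_connectsVia (Equiv.Perm.SameCycle.equivalence _)
      (fun d d' hdd' => (ih' (hdd' ▸ Relation.ReflTransGen.refl)).mul_swap hsep)
      (fun e he => ?_) h
    rcases Finset.mem_insert.1 he with rfl | he
    · exact Equiv.Perm.sameCycle_mul_swap hsep
    · exact (ih' (d := (e, true)) (d' := (e, false)) (connectsVia_ends he)).mul_swap hsep

theorem exists_bernardiStep_iterate_eq (hT : R.IsSpanningTree T)
    (d d' : R.Dart) : ∃ n, (R.bernardiStep T)^[n] d = d' := by
  obtain ⟨n, hn⟩ :=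
    (sameCycle_tourPerm_of_connectsVia hT subset_rfl (hT.1 _ _)).exists_nat_pow_eq
  exact ⟨n, by rw [← coe_tourPerm, Equiv.Perm.iterate_eq_pow, hn]⟩

open scoped Classical in
theorem bernardiDiv_apply (T : Finset R.E) (d : R.Dart) (v : R.V) :
    R.bernardiDiv T d v =
      ∑ e, if e ∉ T ∧ R.FirstVisitTail (R.bernardiTour T d) e v then 1 else 0 := by
  rw [bernardiDiv, Finset.card_filter]
  push_cast
  rfl

theorem bernardiTour_bernardiStep (T : Finset R.E) (d : R.Dart) :
    R.bernardiTour T (R.bernardiStep T d) = fun i => R.bernardiTour T d (i + 1) :=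
  funext fun i => (iterate_succ_apply _ i d).symm

theorem dtail_bernardiStep (T : Finset R.E) (d : R.Dart) :
    R.dtail (R.bernardiStep T d) = if d.1 ∈ T then R.dhead d else R.dtail d := by
  rw [← coe_tourPerm, dtail_tourPerm]

/-- Restarting the tour one step later moves the first visit of the edge of `d` from `d` to its
reversal, and leaves the first visits of all other edges in place. -/
theorem bernardiDiv_bernardiStep (hT : R.IsSpanningTree T) (d : R.Dart) :
    R.bernardiDiv T (R.bernardiStep T d) + Pi.single (R.dtail (R.bernardiStep T d)) 1 =
      R.bernardiDiv T d + Pi.single (R.dtail d) 1 + R.dartDiv d := by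
  obtain ⟨m, hm0, hmN, hflip⟩ :=
    exists_iterate_eq_flipPerm (exists_bernardiStep_iterate_eq hT) d
  have hfirst : ∀ v, R.FirstVisitTail (R.bernardiTour T (R.bernardiStep T d)) d.1 v ↔
      R.dhead d = v := by
    intro v
    have hm : m - 1 + 1 = m := by omega
    rw [bernardiTour_bernardiStep, firstVisitTail_iff (i := m - 1)]
    · simp only [bernardiTour, hm, hflip, dtail_flipPerm]
    · simp only [bernardiTour, hm, hflip, fst_flipPerm]
    · intro j hj h
      rcases (iterate_fst_eq_iff hmN hflip (by omega)).1 h with h | h <;> omega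
  have hfirst₀ : ∀ v, R.FirstVisitTail (R.bernardiTour T d) d.1 v ↔ R.dtail d = v :=
    fun v => firstVisitTail_iff (i := 0) rfl (by simp)
  have hother : ∀ e ≠ d.1, ∀ v,
      R.FirstVisitTail (R.bernardiTour T (R.bernardiStep T d)) e v ↔
        R.FirstVisitTail (R.bernardiTour T d) e v := by
    intro e he v
    rw [bernardiTour_bernardiStep]
    exact firstVisitTail_succ_iff (Ne.symm he)
  funext v
  simp only [Pi.add_apply, bernardiDiv_apply]
  rw [← Finset.add_sum_erase _ _ (Finset.mem_univ d.1),
    ← Finset.add_sum_erase _ _ (Finset.mem_univ d.1),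
    Finset.sum_congr rfl fun e he => by rw [hother e (Finset.ne_of_mem_erase he)],
    hfirst, hfirst₀, dtail_bernardiStep]
  by_cases hd : d.1 ∈ T
  · simp [hd, dartDiv, Pi.single_apply, eq_comm]
  · simp [hd, dartDiv, Pi.single_apply, eq_comm]
    ring

theorem bernardiDiv_bernardiStep_iterate (hT : R.IsSpanningTree T) (d : R.Dart) (n : ℕ) :
    R.bernardiDiv T ((R.bernardiStep T)^[n] d) + Pi.single (R.dtail ((R.bernardiStep T)^[n] d)) 1 =
      R.bernardiDiv T d + Pi.single (R.dtail d) 1 +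
        ∑ j ∈ Finset.range n, R.dartDiv ((R.bernardiStep T)^[j] d) := by
  induction n with
  | zero => simp
  | succ n ih =>
    rw [iterate_succ_apply', bernardiDiv_bernardiStep hT, ih, Finset.sum_range_succ, add_assoc]

theorem connectsVia_erase_dtail_bernardiStep_iff {e : R.E} {x : R.V} {z : R.Dart}
    (hz : z.1 ≠ e) : R.ConnectsVia (T.erase e) x (R.dtail (R.bernardiStep T z)) ↔
      R.ConnectsVia (T.erase e) x (R.dtail z) := by
  rw [dtail_bernardiStep]
  split_ifs with hzT
  · have hzz := connectsVia_dtail_dhead (Finset.mem_erase.2 ⟨hz, hzT⟩)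
    exact ⟨fun h => h.trans hzz.symm, fun h => h.trans hzz⟩
  · rfl

open scoped Classical in
/-- After crossing the tree edge of `d`, the tour explores exactly the darts on the far side of
that edge before it crosses back along the reversal of `d`. -/
theorem image_iterate_eq_filter_connectsVia (hT : R.IsSpanningTree T) {d : R.Dart}
    (hd : d.1 ∈ T) {m : ℕ} (hmN : m < minimalPeriod (R.bernardiStep T) d)
    (hflip : (R.bernardiStep T)^[m] d = R.flipPerm d) :
    (Finset.range m).image (fun j => (R.bernardiStep T)^[j + 1] d) =
      Finset.univ.filter fun δ => R.ConnectsVia (T.erase d.1) (R.dhead d) (R.dtail δ) := by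
  set f := R.bernardiStep T
  set Q : R.Dart → Prop := fun δ => R.ConnectsVia (T.erase d.1) (R.dhead d) (R.dtail δ)
  have hstep : ∀ j, 0 < j → j < minimalPeriod f d → j ≠ m →
      (Q (f^[j + 1] d) ↔ Q (f^[j] d)) :=
    fun j hj hjN hjm => by
      rw [iterate_succ_apply']
      exact connectsVia_erase_dtail_bernardiStep_iff fun h => by
        rcases (iterate_fst_eq_iff hmN hflip hjN).1 h with h | h <;> omega
  have hQ₁ : Q (f^[1] d) := by
    simp only [Q, f, iterate_one, dtail_bernardiStep, if_pos hd]
    exact Relation.ReflTransGen.refl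
  have hQ₀ : ¬ Q d := hT.not_connectsVia_erase_dhead hd
  have hQm : ¬ Q (f^[m + 1] d) := by
    rw [iterate_succ_apply', hflip]
    simpa only [Q, f, dtail_bernardiStep, fst_flipPerm, if_pos hd, dhead_flipPerm] using hQ₀
  have hin : ∀ j < m, Q (f^[j + 1] d) := fun j hj =>
    (pred_iterate_iff_of_invariant (a := 1) (b := m)
      (fun i hi hib => hstep i hi (by omega) hib.ne) (by omega) hj).2 hQ₁
  have hout : ∀ j, m < j → j < minimalPeriod f d → ¬ Q (f^[j] d) := fun j hmj hjN =>
    (pred_iterate_iff_of_invariant (a := m + 1) (b := minimalPeriod f d - 1)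
      (fun i hi hib => hstep i (by omega) (by omega) (by omega)) hmj (by omega)).not.2 hQm
  ext δ
  simp only [Finset.mem_image, Finset.mem_range, Finset.mem_filter, Finset.mem_univ, true_and]
  refine ⟨fun ⟨j, hj, hδ⟩ => hδ ▸ hin j hj, fun hδ => ?_⟩
  obtain ⟨n, rfl⟩ := exists_bernardiStep_iterate_eq hT d δ
  rw [← iterate_mod_minimalPeriod_eq] at hδ ⊢
  have hnN : n % minimalPeriod f d < minimalPeriod f d := Nat.mod_lt n
    (minimalPeriod_pos_of_forall_exists_iterate_eq (exists_bernardiStep_iterate_eq hT) d)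
  rcases hn : n % minimalPeriod f d with _ | j
  · rw [hn, iterate_zero_apply] at hδ
    exact absurd hδ hQ₀
  · refine ⟨j, ?_, rfl⟩
    by_contra hjm
    exact hout (j + 1) (by omega) (by omega) (hn ▸ hδ)

open scoped Classical in
theorem sum_dartDiv_iterate_eq_neg_lap (hT : R.IsSpanningTree T) {d : R.Dart} (hd : d.1 ∈ T)
    {m : ℕ} (hmN : m < minimalPeriod (R.bernardiStep T) d)
    (hflip : (R.bernardiStep T)^[m] d = R.flipPerm d) :
    ∑ j ∈ Finset.range m, R.dartDiv ((R.bernardiStep T)^[j + 1] d) =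
      -R.lap fun x => if R.ConnectsVia (T.erase d.1) (R.dhead d) x then 1 else 0 := by
  have hinj : Set.InjOn (fun j => (R.bernardiStep T)^[j + 1] d) (Finset.range m) :=
    fun i hi j hj h => by
      have := iterate_injOn_Iio_minimalPeriod (f := R.bernardiStep T) (x := d)
        (show i + 1 < _ by simp at hi; omega) (show j + 1 < _ by simp at hj; omega) h
      omega
  rw [← Finset.sum_image hinj, image_iterate_eq_filter_connectsVia hT hd hmN hflip,
    Finset.sum_filter, ← sum_smul_dartDiv]
  refine Finset.sum_congr rfl fun δ _ => ?_
  split_ifs <;> simp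

theorem linEquiv_bernardiDiv_next (hT : R.IsSpanningTree T) (d : R.Dart) :
    R.LinEquiv (R.bernardiDiv T (R.next d)) (R.dartDiv d + R.bernardiDiv T d) := by
  by_cases hd : d.1 ∈ T
  · classical
    obtain ⟨m, -, hmN, hflip⟩ :=
      exists_iterate_eq_flipPerm (exists_bernardiStep_iterate_eq hT) d
    have hnext : (R.bernardiStep T)^[m + 1] d = R.next d := by
      rw [iterate_succ_apply', hflip, ← coe_tourPerm, tourPerm_apply, fst_flipPerm, if_pos hd,
        flipPerm_flipPerm]
    have htour := bernardiDiv_bernardiStep_iterate hT d (m + 1)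
    rw [hnext, dtail_next, Finset.sum_range_succ', sum_dartDiv_iterate_eq_neg_lap hT hd hmN hflip,
      iterate_zero_apply] at htour
    refine ⟨-fun x => if R.ConnectsVia (T.erase d.1) (R.dhead d) x then 1 else 0, ?_⟩
    rw [lap_neg]
    linear_combination htour
  · have hstep : R.bernardiStep T d = R.next d := by
      rw [← coe_tourPerm, tourPerm_apply, if_neg hd]
    have hrot := bernardiDiv_bernardiStep hT d
    rw [hstep, dtail_next] at hrot
    exact LinEquiv.of_eq (by linear_combination hrot)

theorem linEquiv_bernardiDiv_next_iterate (hT : R.IsSpanningTree T) (d : R.Dart) (k : ℕ) :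
    R.LinEquiv (R.bernardiDiv T (R.next^[k] d))
      (∑ j ∈ Finset.range k, R.dartDiv (R.next^[j] d) + R.bernardiDiv T d) := by
  induction k with
  | zero => exact LinEquiv.of_eq (by simp)
  | succ k ih =>
    rw [iterate_succ_apply', Finset.sum_range_succ, add_comm _ (R.dartDiv _), add_assoc]
    exact (linEquiv_bernardiDiv_next hT _).trans (ih.add_left _)

theorem bernardi_independent_of_edge_up_to_translation_general (R : RibbonGraph)
    (v : R.toMultigraph.V) (d₁ d₂ : R.toMultigraph.Dart)
    (h₁ : R.toMultigraph.dtail d₁ = v) (h₂ : R.toMultigraph.dtail d₂ = v) :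
    ∃ γ₀ : R.toMultigraph.V → ℤ, R.toMultigraph.deg γ₀ = 0 ∧
      ∀ T : Finset R.toMultigraph.E, R.toMultigraph.IsSpanningTree T →
        R.toMultigraph.LinEquiv (R.bernardiDiv T d₂) (γ₀ + R.bernardiDiv T d₁) := by
  obtain ⟨k, hk⟩ := ((R.cyclic d₁ d₂).1 (h₁.trans h₂.symm)).exists_nat_pow_eq
  refine ⟨∑ j ∈ Finset.range k, R.dartDiv (R.next^[j] d₁), by simp [deg_sum, deg_dartDiv],
    fun T hT => ?_⟩
  rw [← hk]
  exact linEquiv_bernardiDiv_next_iterate hT d₁ k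

/-- for two edges `e₁, e₂` incident to the same vertex `v`
(encoded as darts `d₁, d₂` with tail `v`), there is a degree-zero divisor
class `γ₀` with `[β_{(v,e₂)}(T)] = γ₀ + [β_{(v,e₁)}(T)]` for every spanning
tree `T`; in particular `β_{(v,e₁)}(T) - β_{(v,e₂)}(T)` is independent of `T`
up to linear equivalence. -/
theorem bernardi_independent_of_edge_up_to_translation (R : RibbonGraph)
    (hG : R.toMultigraph.Connected) (hl : R.toMultigraph.Loopless)
    (v : R.toMultigraph.V) (d₁ d₂ : R.toMultigraph.Dart)
    (h₁ : R.toMultigraph.dtail d₁ = v) (h₂ : R.toMultigraph.dtail d₂ = v) :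
    ∃ γ₀ : R.toMultigraph.V → ℤ, R.toMultigraph.deg γ₀ = 0 ∧
      ∀ T : Finset R.toMultigraph.E, R.toMultigraph.IsSpanningTree T →
        R.toMultigraph.LinEquiv (R.bernardiDiv T d₂) (γ₀ + R.bernardiDiv T d₁) :=
  bernardi_independent_of_edge_up_to_translation_general R v d₁ d₂ h₁ h₂

end RibbonGraph
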